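/- arXiv:2411.12042 — 3 statements merged into one kernel-verified Lean document; each statement's English description precedes it below -/
import Mathlib

section
/- For the gap-dependent SPMA bandit update π_{t+1}(a) = π_t(a)[1 + ∑_{a'≠a} π_t(a') sign(r(a) - r(a'))], starting from a probability distribution π_t, π_{t+1} is again a probability distribution (it sums to 1 and is non-negative). -/
/-- The gap-dependent SPMA bandit update preserves probability distributions. -/
theorem spma_gap_update_valid (K : ℕ) (hK : 0 < K)
    (r : Fin K → ℝ) (hr : Function.Injective r)
    (π : Fin K → ℝ) (hπ0 : ∀ a, 0 ≤ π a) (hπ1 : ∑ a, π a = 1)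
    (π' : Fin K → ℝ)
    (hupd : ∀ a, π' a =
      π a * (1 + ∑ a' ∈ Finset.univ \ {a}, π a' * Real.sign (r a - r a'))) :
    (∑ a, π' a = 1) ∧ ∀ a, 0 ≤ π' a := by
  have hfull : ∀ a : Fin K, ∑ a' ∈ Finset.univ \ {a}, π a' * Real.sign (r a - r a')
      = ∑ a', π a' * Real.sign (r a - r a') := by
    intro a
    rw [Finset.sum_sdiff_eq_sub (Finset.subset_univ _)]
    simp [Real.sign_zero]
  constructor
  · have hS : ∑ a, ∑ a', π a * (π a' * Real.sign (r a - r a')) = 0 := by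
      have h1 : ∑ a, ∑ a', π a * (π a' * Real.sign (r a - r a'))
          = ∑ a', ∑ a, π a * (π a' * Real.sign (r a - r a')) := Finset.sum_comm
      have h2 : ∑ a', ∑ a, π a * (π a' * Real.sign (r a - r a'))
          = -∑ a, ∑ a', π a * (π a' * Real.sign (r a - r a')) := by
        rw [← Finset.sum_neg_distrib]
        refine Finset.sum_congr rfl fun a _ => ?_
        rw [← Finset.sum_neg_distrib]
        refine Finset.sum_congr rfl fun b _ => ?_
        have : r b - r a = -(r a - r b) := by ring
        rw [this, Real.sign_neg]
        ring
      have := h1.trans h2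
      linarith
    calc ∑ a, π' a = ∑ a, (π a + π a * ∑ a', π a' * Real.sign (r a - r a')) := by
          refine Finset.sum_congr rfl fun a _ => ?_
          rw [hupd a, hfull a]; ring
      _ = 1 := by
          rw [Finset.sum_add_distrib, hπ1]
          simp only [Finset.mul_sum] at hS ⊢
          rw [hS]; ring
  · intro a
    rw [hupd a]
    refine mul_nonneg (hπ0 a) ?_
    have hge : ∑ a' ∈ Finset.univ \ {a}, π a' * Real.sign (r a - r a')
        ≥ ∑ a' ∈ Finset.univ \ {a}, -(π a') := by
      refine Finset.sum_le_sum fun b _ => ?_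
      have h1 : -1 ≤ Real.sign (r a - r b) := by
        rcases le_or_gt (r a - r b) 0 with h | h
        · rcases eq_or_lt_of_le h with h' | h'
          · rw [h', Real.sign_zero]; norm_num
          · rw [Real.sign_of_neg h']
        · rw [Real.sign_of_pos h]; norm_num
      nlinarith [hπ0 b]
    have hsub : ∑ a' ∈ Finset.univ \ {a}, π a' = 1 - π a := by
      rw [Finset.sum_sdiff_eq_sub (Finset.subset_univ _), hπ1]
      simp
    have : ∑ a' ∈ Finset.univ \ {a}, -(π a') = -(1 - π a) := by
      rw [Finset.sum_neg_distrib, hsub]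
    nlinarith [hπ0 a]
end

section
/- For the gap-dependent SPMA bandit update with step-sizes η_{a,a'} = 1/|r(a)-r(a')| and uniform initialization over K arms, the suboptimality satisfies r(a*) - ⟨π_T, r⟩ ≤ (1 - 1/K)^{2^T} (super-linear convergence). -/
lemma sign_abs_le' (x : ℝ) : |Real.sign x| ≤ 1 := by
  rcases lt_trichotomy x 0 with h | h | h
  · rw [Real.sign_of_neg h]; norm_num
  · rw [h, Real.sign_zero]; norm_num
  · rw [Real.sign_of_pos h]; norm_num

lemma sign_antisymm' (x y : ℝ) : Real.sign (x - y) = - Real.sign (y - x) := by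
  rcases lt_trichotomy x y with h | h | h
  · rw [Real.sign_of_neg (by linarith), Real.sign_of_pos (by linarith)]
  · simp [h]
  · rw [Real.sign_of_pos (by linarith), Real.sign_of_neg (by linarith)]; ring

/-- Super-linear convergence of the gap-dependent SPMA bandit update. -/
theorem spma_gap_superlinear (K : ℕ) (hK : 0 < K)
    (r : Fin K → ℝ) (hr : ∀ a, 0 ≤ r a ∧ r a ≤ 1) (hinj : Function.Injective r)
    (astar : Fin K) (hstar : ∀ a, a ≠ astar → r a < r astar)
    (π : ℕ → Fin K → ℝ)
    (hinit : ∀ a, π 0 a = 1 / K)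
    (hupd : ∀ t a, π (t + 1) a =
      π t a * (1 + ∑ a' ∈ Finset.univ \ {a}, π t a' * Real.sign (r a - r a'))) :
    ∀ T : ℕ, r astar - ∑ a, π T a * r a ≤ (1 - 1 / (K : ℝ)) ^ (2 ^ T) := by
  have hKR : (0:ℝ) < K := by exact_mod_cast hK
  have key : ∀ t, (∀ a, 0 ≤ π t a) ∧ (∑ a, π t a = 1) ∧
      (1 - π t astar = (1 - 1/(K:ℝ)) ^ (2 ^ t)) := by
    intro t
    induction t with
    | zero =>
      refine ⟨fun a => by rw [hinit]; positivity, ?_, ?_⟩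
      · simp only [hinit, Finset.sum_const, Finset.card_univ, Fintype.card_fin,
          nsmul_eq_mul]
        field_simp
      · simp [hinit]
    | succ t ih =>
      obtain ⟨hnn, hsum, hval⟩ := ih
      have hSbound : ∀ a : Fin K,
          |∑ a' ∈ Finset.univ \ {a}, π t a' * Real.sign (r a - r a')| ≤ 1 := by
        intro a
        calc |∑ a' ∈ Finset.univ \ {a}, π t a' * Real.sign (r a - r a')|
            ≤ ∑ a' ∈ Finset.univ \ {a}, |π t a' * Real.sign (r a - r a')| :=
              Finset.abs_sum_le_sum_abs _ _
          _ ≤ ∑ a' ∈ Finset.univ \ {a}, π t a' := by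
              apply Finset.sum_le_sum
              intro a' _
              rw [abs_mul, abs_of_nonneg (hnn a')]
              have h1 := sign_abs_le' (r a - r a')
              nlinarith [hnn a', abs_nonneg (Real.sign (r a - r a'))]
          _ ≤ ∑ a', π t a' := Finset.sum_le_sum_of_subset_of_nonneg
              Finset.sdiff_subset (fun a' _ _ => hnn a')
          _ = 1 := hsum
      have hnn' : ∀ a, 0 ≤ π (t+1) a := by
        intro a
        rw [hupd]
        have := hSbound a
        have h2 : -1 ≤ ∑ a' ∈ Finset.univ \ {a}, π t a' * Real.sign (r a - r a') :=
          neg_le_of_abs_le this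
        nlinarith [hnn a]
      -- sum preserved
      have hzero : (∑ a, ∑ a', π t a * (π t a' * Real.sign (r a - r a'))) = 0 := by
        have hD : (∑ a, ∑ a', π t a * (π t a' * Real.sign (r a - r a')))
            = - ∑ a, ∑ a', π t a * (π t a' * Real.sign (r a - r a')) := by
          calc (∑ a, ∑ a', π t a * (π t a' * Real.sign (r a - r a')))
              = ∑ a, ∑ a', -(π t a' * (π t a * Real.sign (r a' - r a))) := by
                apply Finset.sum_congr rfl
                intro a _
                apply Finset.sum_congr rfl
                intro a' _
                rw [sign_antisymm' (r a) (r a')]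
                ring
            _ = - ∑ a, ∑ a', π t a' * (π t a * Real.sign (r a' - r a)) := by
                simp
            _ = - ∑ a, ∑ a', π t a * (π t a' * Real.sign (r a - r a')) := by
                rw [Finset.sum_comm]
        linarith
      have hsum' : ∑ a, π (t+1) a = 1 := by
        have hrw : ∀ a : Fin K, π (t+1) a
            = π t a + ∑ a', π t a * (π t a' * Real.sign (r a - r a')) := by
          intro a
          rw [hupd, mul_add, mul_one, Finset.mul_sum]
          congr 1
          have hdiag : π t a * (π t a * Real.sign (r a - r a)) = 0 := by
            simp
          rw [Finset.sum_sdiff_eq_sub (Finset.subset_univ {a}),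
            Finset.sum_singleton, hdiag, sub_zero]
        simp only [hrw, Finset.sum_add_distrib, hsum, hzero, add_zero]
      refine ⟨hnn', hsum', ?_⟩
      have hstarupd : π (t+1) astar = π t astar * (2 - π t astar) := by
        rw [hupd]
        have hsgn : ∀ a' ∈ Finset.univ \ {astar},
            π t a' * Real.sign (r astar - r a') = π t a' := by
          intro a' ha'
          have hne : a' ≠ astar := by
            simpa [Finset.mem_sdiff] using ha'
          rw [Real.sign_of_pos (by linarith [hstar a' hne]), mul_one]
        rw [Finset.sum_congr rfl hsgn]
        have : ∑ a' ∈ Finset.univ \ {astar}, π t a' = 1 - π t astar := by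
          rw [Finset.sum_sdiff_eq_sub (Finset.subset_univ {astar}),
            Finset.sum_singleton, hsum]
        rw [this]; ring
      rw [hstarupd]
      have : 1 - π t astar * (2 - π t astar) = (1 - π t astar)^2 := by ring
      rw [this, hval, ← pow_mul, pow_succ]
  intro T
  obtain ⟨hnn, hsum, hval⟩ := key T
  have h1 : r astar - ∑ a, π T a * r a = ∑ a, π T a * (r astar - r a) := by
    have h2 : ∑ a, π T a * (r astar - r a)
        = (∑ a, π T a) * r astar - ∑ a, π T a * r a := by
      rw [Finset.sum_mul, ← Finset.sum_sub_distrib]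
      apply Finset.sum_congr rfl
      intro a _
      ring
    rw [h2, hsum, one_mul]
  rw [h1, ← hval]
  have h3 : ∑ a, π T a * (r astar - r a)
      = ∑ a ∈ Finset.univ \ {astar}, π T a * (r astar - r a) := by
    rw [Finset.sum_sdiff_eq_sub (Finset.subset_univ {astar}),
      Finset.sum_singleton, sub_self, mul_zero, sub_zero]
  rw [h3]
  have h4 : ∑ a ∈ Finset.univ \ {astar}, π T a * (r astar - r a)
      ≤ ∑ a ∈ Finset.univ \ {astar}, π T a := by
    apply Finset.sum_le_sum
    intro a _
    nlinarith [hnn a, (hr a).1, (hr astar).2]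
  have h5 : ∑ a ∈ Finset.univ \ {astar}, π T a = 1 - π T astar := by
    rw [Finset.sum_sdiff_eq_sub (Finset.subset_univ {astar}),
      Finset.sum_singleton, hsum]
  linarith
end

section
/- Let π be a probability distribution over a finite action set A and A_adv : A → ℝ a function with ∑_a π(a) A_adv(a) = 0 (an advantage function). Let Ã = {a : A_adv(a) = max_{a'} A_adv(a')}, p = ∑_{a∈Ã} π(a), M = max_a A_adv(a), and Δ = M - max_{a∉Ã} A_adv(a) (assuming Ã ≠ A). Then ∑_a π(a) A_adv(a)² ≥ p · Δ · M. -/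
/-- Key lemma relating the second moment of a zero-mean advantage function to
its maximum via the gap. -/
theorem advantage_second_moment_lower_bound (A : Type*) [Fintype A] [Nonempty A]
    (π : A → ℝ) (hπ0 : ∀ a, 0 ≤ π a) (hπ1 : ∑ a, π a = 1)
    (Aadv : A → ℝ) (hmean : ∑ a, π a * Aadv a = 0)
    (M : ℝ) (hM : ∀ a, Aadv a ≤ M) (hMmem : ∃ a, Aadv a = M) (hMpos : 0 < M)
    (Atil : Finset A) (hAtil : Atil = {a | Aadv a = M})
    (hproper : Atil ≠ Finset.univ)
    (M' : ℝ) (hM' : ∀ a ∉ Atil, Aadv a ≤ M') (hM'mem : ∃ a ∉ Atil, Aadv a = M')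
    (p Δ : ℝ) (hp : p = ∑ a ∈ Atil, π a) (hΔ : Δ = M - M') :
    p * Δ * M ≤ ∑ a, π a * (Aadv a) ^ 2 := by
  classical
  have hmem : ∀ a, a ∈ Atil ↔ Aadv a = M := fun a => by
    have := Set.ext_iff.mp hAtil a; simpa using this
  -- split sums
  have hsplit : ∀ f : A → ℝ, ∑ a ∈ Atil, f a + ∑ a ∈ Atilᶜ, f a = ∑ a, f a :=
    fun f => Finset.sum_add_sum_compl Atil f
  have h1 : ∑ a ∈ Atil, π a * Aadv a = p * M := by
    rw [hp, Finset.sum_mul]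
    exact Finset.sum_congr rfl fun a ha => by rw [(hmem a).mp ha]
  have h2 : ∑ a ∈ Atil, π a * Aadv a ^ 2 = p * M ^ 2 := by
    rw [hp, Finset.sum_mul]
    exact Finset.sum_congr rfl fun a ha => by rw [(hmem a).mp ha]
  have hc1 : ∑ a ∈ Atilᶜ, π a * Aadv a = -(p * M) := by
    have := hsplit (fun a => π a * Aadv a)
    rw [hmean, h1] at this; linarith
  have hp0 : 0 ≤ p := hp ▸ Finset.sum_nonneg fun a _ => hπ0 a
  have hScnn : 0 ≤ ∑ a ∈ Atilᶜ, π a * Aadv a ^ 2 :=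
    Finset.sum_nonneg fun a _ => mul_nonneg (hπ0 a) (sq_nonneg _)
  have key : -(p * M * M') ≤ ∑ a ∈ Atilᶜ, π a * Aadv a ^ 2 := by
    rcases le_or_gt 0 M' with hM'0 | hM'0
    · nlinarith [mul_nonneg (mul_nonneg hp0 hMpos.le) hM'0]
    · have term : ∀ a ∈ Atilᶜ, M' * (π a * Aadv a) ≤ π a * Aadv a ^ 2 := by
        intro a ha
        have haA : Aadv a ≤ M' := hM' a (Finset.mem_compl.mp ha)
        have h0 : 0 ≤ π a * ((-Aadv a) * (M' - Aadv a)) :=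
          mul_nonneg (hπ0 a) (mul_nonneg (by linarith) (by linarith))
        nlinarith [h0]
      have := Finset.sum_le_sum term
      rw [← Finset.mul_sum, hc1] at this
      linarith
  have := hsplit (fun a => π a * Aadv a ^ 2)
  rw [h2] at this
  have expand : p * Δ * M = p * M ^ 2 - p * M * M' := by rw [hΔ]; ring
  linarith
end
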